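/- arXiv:2401.15706 — 3 statements merged into one kernel-verified Lean document; each statement's English description precedes it below -/
import Mathlib

section
/- Let p be a prime, G a finite group, and P a p-subgroup of G. Then the complex vector space of G-invariant class functions on P is spanned by the indecomposable G-invariant characters of P. -/
open scoped ComplexOrder

/-- `f : H → ℂ` is a (complex) character of `H`: the pointwise trace of some
finite-dimensional complex representation of `H`. -/
def IsCharacter {H : Type} [Monoid H] (f : H → ℂ) : Prop :=
  ∃ V : FDRep ℂ H, ∀ h, V.character h = f h

/-- `f : H → ℂ` is an irreducible character of `H`: the character of a simple
finite-dimensional complex representation of `H`. -/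
def IsIrreducibleChar {H : Type} [Monoid H] (f : H → ℂ) : Prop :=
  ∃ V : FDRep ℂ H, CategoryTheory.Simple V ∧ ∀ h, V.character h = f h

/-- A `G`-invariant character of a subgroup `P ≤ G`: a character of `P` taking equal
values on elements of `P` that are conjugate in `G`. -/
def IsInvariantChar {G : Type} [Group G] (P : Subgroup G) (f : P → ℂ) : Prop :=
  IsCharacter f ∧ ∀ x y : P, IsConj (x : G) (y : G) → f x = f y

/-- An indecomposable `G`-invariant character of `P`: a nonzero `G`-invariant character
that is not the sum of two nonzero `G`-invariant characters. -/
def IsIndecInvariantChar {G : Type} [Group G] (P : Subgroup G) (f : P → ℂ) : Prop :=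
  IsInvariantChar P f ∧ f ≠ 0 ∧
    ¬ ∃ g h : P → ℂ, IsInvariantChar P g ∧ IsInvariantChar P h ∧ g ≠ 0 ∧ h ≠ 0 ∧ f = g + h

/-- The usual scalar product of class functions: `[f, g] = |H|⁻¹ ∑_{x ∈ H} f x * conj (g x)`. -/
noncomputable def charInner {H : Type} (f g : H → ℂ) : ℂ :=
  (Nat.card H : ℂ)⁻¹ * ∑ᶠ x, f x * starRingEnd ℂ (g x)

open scoped Classical in
/-- The regular character of `H`: `|H|` at the identity and `0` elsewhere. -/
noncomputable def regChar (H : Type) [Group H] : H → ℂ :=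
  fun h => if h = 1 then (Nat.card H : ℂ) else 0

lemma char_is_class {H : Type} [Group H] {χ : H → ℂ} (hχ : IsCharacter χ) (h g : H) :
    χ (h * g * h⁻¹) = χ g := by
  obtain ⟨V, hV⟩ := hχ
  rw [← hV, ← hV, FDRep.char_conj]

section LemK
variable {H : Type} [Group H] [Fintype H]

open MonoidAlgebra Module

set_option maxHeartbeats 2000000 in
lemma classfun_eq_zero_of_orth (f : H → ℂ) (hf : ∀ h g : H, f (h * g * h⁻¹) = f g)
    (h0 : ∀ χ : H → ℂ, IsCharacter χ → ∑ g : H, f g * χ g⁻¹ = 0) :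
    f = 0 := by
  classical
  haveI : NeZero ((Fintype.card H : ℂ)) := ⟨Nat.cast_ne_zero.mpr Fintype.card_ne_zero⟩
  set A := MonoidAlgebra ℂ H with hA
  set a : A := ∑ g : H, MonoidAlgebra.single g⁻¹ (f g) with ha
  have hcomm : ∀ h : H, a * MonoidAlgebra.single h 1 = MonoidAlgebra.single h 1 * a := by
    intro h
    rw [ha, Finset.sum_mul, Finset.mul_sum]
    refine Fintype.sum_equiv (MulAut.conj h⁻¹).toEquiv _ _ fun g => ?_
    show single g⁻¹ (f g) * single h 1 = single h 1 * single (h⁻¹ * g * h⁻¹⁻¹)⁻¹ (f (h⁻¹ * g * h⁻¹⁻¹))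
    rw [hf h⁻¹ g, single_mul_single, single_mul_single, one_mul, mul_one]
    congr 1
    group
  have hcen : ∀ r : A, a * r = r * a := by
    intro r
    refine MonoidAlgebra.induction_on (motive := fun r => a * r = r * a) r (fun g => by
      rw [MonoidAlgebra.of_apply]; exact hcomm g) (fun x y hx hy => ?_)
      (fun c x hx => ?_)
    · show a * (x + y) = (x + y) * a
      rw [mul_add, add_mul, show a * x = x * a from hx, show a * y = y * a from hy]
    · show a * (c • x) = (c • x) * a
      rw [mul_smul_comm, smul_mul_assoc, show a * x = x * a from hx]
  haveI : FiniteDimensional ℂ A :=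
    Module.Finite.equiv ((Finsupp.linearEquivFunOnFinite ℂ ℂ H).symm.trans (MonoidAlgebra.coeffLinearEquiv ℂ).symm)
  have hkill : ∀ S : Submodule A A, IsSimpleModule A ↥S → ∀ s : ↥S, a • s = 0 := by
    intro S hS s
    haveI := hS
    haveI : Nontrivial ↥S := IsSimpleModule.nontrivial A ↥S
    haveI : FiniteDimensional ℂ ↥S :=
      FiniteDimensional.of_injective (S.subtype.restrictScalars ℂ)
        Subtype.coe_injective
    let L : ↥S →ₗ[A] ↥S :=
      { toFun := fun u => a • u
        map_add' := fun u v => smul_add a u v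
        map_smul' := fun r u => by
          simp only [RingHom.id_apply]
          rw [smul_smul, smul_smul, hcen r] }
    obtain ⟨c, hc⟩ := Module.End.exists_eigenvalue (L.restrictScalars ℂ)
    obtain ⟨v, hv⟩ := hc.exists_hasEigenvector
    have hcomm' : ∀ (d : ℂ) (r : A) (u : ↥S), d • (r • u) = r • (d • u) := by
      intro d r u
      apply Subtype.ext
      simp only [SetLike.val_smul, smul_eq_mul]
      exact (mul_smul_comm d r (u : A)).symm
    let N : ↥S →ₗ[A] ↥S :=
      { toFun := fun u => a • u - c • u
        map_add' := fun u v => by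
          show a • (u + v) - c • (u + v) = (a • u - c • u) + (a • v - c • v)
          rw [smul_add, smul_add]; abel
        map_smul' := fun r u => by
          show a • (r • u) - c • (r • u) = r • (a • u - c • u)
          rw [smul_sub, smul_smul, smul_smul, hcen r, ← smul_smul, hcomm' c r u] }
    have hNv : N v = 0 := by
      have : a • v = c • v := hv.apply_eq_smul
      show a • v - c • v = 0
      rw [this, sub_self]
    have hN0 : N = 0 := by
      refine N.bijective_or_eq_zero.resolve_left fun hbij => ?_
      exact hv.right (hbij.injective (by rw [hNv, map_zero]))
    have hsc : ∀ u : ↥S, a • u = c • u := by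
      intro u
      have h' : N u = 0 := by rw [hN0]; rfl
      have h'' : a • u - c • u = 0 := h'
      exact sub_eq_zero.mp h''
    -- build the representation on S
    let m : H →* (↥S →ₗ[ℂ] ↥S) :=
      { toFun := fun g =>
          { toFun := fun u => (MonoidAlgebra.single g 1 : A) • u
            map_add' := fun u v => smul_add _ u v
            map_smul' := fun d u => by
              simp only [RingHom.id_apply]
              exact (hcomm' d _ u).symm }
        map_one' := by
          refine LinearMap.ext fun u => ?_
          show (MonoidAlgebra.single (1 : H) (1 : ℂ) : A) • u = u
          rw [← MonoidAlgebra.one_def, one_smul]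
        map_mul' := fun g h => by
          refine LinearMap.ext fun u => ?_
          show (MonoidAlgebra.single (g * h) (1 : ℂ) : A) • u = _
          rw [show (MonoidAlgebra.single (g * h) (1 : ℂ) : A)
                = MonoidAlgebra.single g 1 * MonoidAlgebra.single h 1 by
              rw [MonoidAlgebra.single_mul_single, one_mul]]
          rw [mul_smul, Module.End.mul_apply]
          rfl }
    let V : FDRep ℂ H := FDRep.of m
    have hchar : IsCharacter (V.character) := ⟨V, fun _ => rfl⟩
    have hL0 : (L.restrictScalars ℂ) = ∑ g : H, f g • (m g⁻¹) := by
      refine LinearMap.ext fun u => ?_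
      show a • u = _
      rw [LinearMap.sum_apply, ha,
        show (∑ g : H, MonoidAlgebra.single g⁻¹ (f g)) • u
            = ∑ g : H, (MonoidAlgebra.single g⁻¹ (f g) : A) • u from Finset.sum_smul]
      refine Finset.sum_congr rfl fun g _ => ?_
      rw [LinearMap.smul_apply]
      show (MonoidAlgebra.single g⁻¹ (f g) : A) • u
          = f g • ((MonoidAlgebra.single g⁻¹ (1:ℂ) : A) • u)
      rw [← smul_assoc, show f g • (MonoidAlgebra.single g⁻¹ (1:ℂ) : A)
            = MonoidAlgebra.single g⁻¹ (f g) by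
          rw [MonoidAlgebra.smul_single', mul_one]]
    have htr : LinearMap.trace ℂ ↥S (L.restrictScalars ℂ) = ∑ g : H, f g * V.character g⁻¹ := by
      rw [hL0, map_sum]
      refine Finset.sum_congr rfl fun g _ => ?_
      rw [map_smul, smul_eq_mul]
      rfl
    have htr2 : LinearMap.trace ℂ ↥S (L.restrictScalars ℂ)
        = c * (Module.finrank ℂ ↥S : ℂ) := by
      have hid : (L.restrictScalars ℂ) = c • (LinearMap.id : ↥S →ₗ[ℂ] ↥S) := by
        refine LinearMap.ext fun u => ?_
        show a • u = _
        rw [hsc u]; rfl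
      rw [hid, map_smul, LinearMap.trace_id, smul_eq_mul]
    have hc0 : c = 0 := by
      have h1 : c * (Module.finrank ℂ ↥S : ℂ) = 0 := by
        rw [← htr2, htr]; exact h0 V.character hchar
      have hfr : ((Module.finrank ℂ ↥S : ℕ) : ℂ) ≠ 0 :=
        Nat.cast_ne_zero.mpr (Module.finrank_pos).ne'
      exact (mul_eq_zero.mp h1).resolve_right hfr
    rw [hsc s, hc0, zero_smul]
  -- use semisimplicity of the group algebra to conclude a = 0
  let K : Submodule A A :=
    { carrier := {x | a * x = 0}
      add_mem' := fun {x y} hx hy => by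
        show a * (x + y) = 0
        rw [mul_add, show a * x = 0 from hx, show a * y = 0 from hy, add_zero]
      zero_mem' := mul_zero a
      smul_mem' := fun r x hx => by
        show a * (r • x) = 0
        rw [smul_eq_mul, ← mul_assoc, hcen r, mul_assoc, show a * x = 0 from hx, mul_zero] }
  have htop : sSup {S : Submodule A A | IsSimpleModule A ↥S} ≤ K := by
    refine sSup_le fun S hS x hx => ?_
    have h' := congrArg (Subtype.val) (hkill S hS ⟨x, hx⟩)
    exact (by simpa using h' : a * x = 0)
  have h1K : (1 : A) ∈ K := by
    have hss := IsSemisimpleModule.sSup_simples_eq_top A A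
    exact (le_of_eq_of_le hss.symm htop) Submodule.mem_top
  have ha0 : a = 0 := by
    have h' : a * 1 = 0 := h1K
    rwa [mul_one] at h'
  funext h
  have hcoef : a.coeff h⁻¹ = f h := by
    rw [ha, MonoidAlgebra.coeff_sum, Finset.sum_apply']
    simp only [MonoidAlgebra.coeff_single]
    simp only [Finsupp.single_apply, inv_inj]
    simp
  rw [ha0] at hcoef
  simpa using hcoef.symm

end LemK

private def conjE {H : Type} [Group H] (h : H) : H ≃ H :=
  ⟨fun x => h * x * h⁻¹, fun x => h⁻¹ * x * h, fun x => by group, fun x => by group⟩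

set_option maxHeartbeats 1000000 in
lemma classfun_mem_span_chars {H : Type} [Group H] [Fintype H]
    (f : H → ℂ) (hf : ∀ h g : H, f (h * g * h⁻¹) = f g) :
    f ∈ Submodule.span ℂ {χ : H → ℂ | IsCharacter χ} := by
  classical
  by_contra hmem
  obtain ⟨ψ, hψf, hψbot⟩ := Submodule.exists_dual_map_eq_bot_of_notMem hmem inferInstance
  have hψ0 : ∀ χ : H → ℂ, IsCharacter χ → ψ χ = 0 := by
    intro χ hχ
    have : ψ χ ∈ Submodule.map ψ (Submodule.span ℂ {χ : H → ℂ | IsCharacter χ}) :=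
      ⟨χ, Submodule.subset_span hχ, rfl⟩
    rw [hψbot] at this
    simpa using this
  set w : H → ℂ := fun x => ψ ((Pi.single x (1:ℂ) : H → ℂ)) with hw
  have hψ_eq : ∀ u : H → ℂ, ψ u = ∑ x : H, u x * w x := by
    intro u
    have hu : u = ∑ x : H, u x • (Pi.single x (1 : ℂ) : H → ℂ) := by
      funext y
      rw [Finset.sum_apply]
      simp [Pi.single_apply, mul_comm]
    conv_lhs => rw [hu]
    rw [map_sum]
    simp [w, smul_eq_mul]
  set f' : H → ℂ := fun x => (Fintype.card H : ℂ)⁻¹ * ∑ h : H, w (h * x⁻¹ * h⁻¹) with hf'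
  have hf'cf : ∀ h g : H, f' (h * g * h⁻¹) = f' g := by
    intro k g
    simp only [hf']
    congr 1
    rw [show (k * g * k⁻¹)⁻¹ = k * g⁻¹ * k⁻¹ by group]
    refine Fintype.sum_equiv (Equiv.mulRight k) _ _ fun h => ?_
    simp only [Equiv.coe_mulRight]
    congr 1
    group
  have horth : ∀ χ : H → ℂ, IsCharacter χ → ∑ g : H, f' g * χ g⁻¹ = 0 := by
    intro χ hχ
    have hsum : ∀ g : H, f' g * χ g⁻¹
        = (Fintype.card H : ℂ)⁻¹ * ∑ h : H, w (h * g⁻¹ * h⁻¹) * χ g⁻¹ := by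
      intro g
      rw [hf']
      rw [mul_assoc, Finset.sum_mul]
    calc ∑ g : H, f' g * χ g⁻¹
        = (Fintype.card H : ℂ)⁻¹ * ∑ g : H, ∑ h : H, w (h * g⁻¹ * h⁻¹) * χ g⁻¹ := by
          rw [Finset.mul_sum]; exact Finset.sum_congr rfl fun g _ => hsum g
      _ = (Fintype.card H : ℂ)⁻¹ * ∑ h : H, ∑ g : H, w (h * g⁻¹ * h⁻¹) * χ g⁻¹ := by
          rw [Finset.sum_comm]
      _ = 0 := by
          have hinner : ∀ h : H, (∑ g : H, w (h * g⁻¹ * h⁻¹) * χ g⁻¹) = ψ χ := by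
            intro h
            rw [hψ_eq χ]
            refine Fintype.sum_equiv ((Equiv.inv H).trans (conjE h)) _ _ fun g => ?_
            show w (h * g⁻¹ * h⁻¹) * χ g⁻¹ = χ (h * g⁻¹ * h⁻¹) * w (h * g⁻¹ * h⁻¹)
            rw [char_is_class hχ h g⁻¹, mul_comm]
          have hzero : ∑ h : H, ∑ g : H, w (h * g⁻¹ * h⁻¹) * χ g⁻¹ = 0 := by
            refine Finset.sum_eq_zero fun h _ => ?_
            rw [hinner h, hψ0 χ hχ]
          rw [hzero, mul_zero]
  have hf'0 : f' = 0 := classfun_eq_zero_of_orth f' hf'cf horth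
  have hcard : ((Fintype.card H : ℂ)) ≠ 0 := Nat.cast_ne_zero.mpr Fintype.card_ne_zero
  have hone : ∀ h : H, ψ f = ∑ x : H, f x * w (h * x * h⁻¹) := by
    intro h
    rw [hψ_eq f]
    refine Fintype.sum_equiv (conjE h).symm _ _ fun x => ?_
    show f x * w x = f (h⁻¹ * x * h) * w (h * (h⁻¹ * x * h) * h⁻¹)
    rw [show h * (h⁻¹ * x * h) * h⁻¹ = x by group,
      show f (h⁻¹ * x * h) = f x by simpa using hf h⁻¹ x]
  have hzero : ∀ x : H, ∑ h : H, w (h * x * h⁻¹) = 0 := by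
    intro x
    have h1 : f' x⁻¹ = 0 := by rw [hf'0]; rfl
    rw [hf'] at h1
    simp only [inv_inv] at h1
    rcases mul_eq_zero.mp h1 with h2 | h2
    · exact absurd h2 (inv_ne_zero hcard)
    · exact h2
  have hmain : (Fintype.card H : ℂ) * ψ f = 0 := by
    calc (Fintype.card H : ℂ) * ψ f = ∑ _h : H, ψ f := by
          rw [Finset.sum_const, Finset.card_univ, nsmul_eq_mul]
      _ = ∑ h : H, ∑ x : H, f x * w (h * x * h⁻¹) :=
          Finset.sum_congr rfl fun h _ => hone h
      _ = ∑ x : H, ∑ h : H, f x * w (h * x * h⁻¹) := Finset.sum_comm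
      _ = 0 := by
          refine Finset.sum_eq_zero fun x _ => ?_
          rw [← Finset.mul_sum, hzero x, mul_zero]
  exact hψf ((mul_eq_zero.mp hmain).resolve_left hcard)


lemma char_zero_of_finrank_zero {H : Type} [Group H] (V : FDRep ℂ H)
    (hz : Module.finrank ℂ V = 0) (x : H) : V.character x = 0 := by
  haveI : Subsingleton V := Module.finrank_zero_iff.mp hz
  have h1 : V.ρ x = 0 := Subsingleton.elim _ _
  show LinearMap.trace ℂ V (V.ρ x) = 0
  rw [h1, map_zero]

lemma invariant_char_mem_span {G : Type} [Group G] (P : Subgroup G) :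
    ∀ (n : ℕ) (φ : P → ℂ) (V : FDRep ℂ P), (∀ h, V.character h = φ h) →
      Module.finrank ℂ V = n → (∀ x y : P, IsConj (x : G) (y : G) → φ x = φ y) →
      φ ∈ Submodule.span ℂ {g : P → ℂ | IsIndecInvariantChar P g} := by
  intro n
  induction n using Nat.strong_induction_on with
  | _ n ih =>
    intro φ V hV hn hinv
    by_cases h0 : φ = 0
    · rw [h0]; exact Submodule.zero_mem _
    by_cases hind : IsIndecInvariantChar P φ
    · exact Submodule.subset_span hind
    have hic : IsInvariantChar P φ := ⟨⟨V, hV⟩, hinv⟩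
    have hdec : ∃ g h : P → ℂ, IsInvariantChar P g ∧ IsInvariantChar P h ∧
        g ≠ 0 ∧ h ≠ 0 ∧ φ = g + h := by
      by_contra hno
      exact hind ⟨hic, h0, hno⟩
    obtain ⟨g, h, hg, hh, hg0, hh0, hgh⟩ := hdec
    obtain ⟨W, hW⟩ := hg.1
    obtain ⟨U, hU⟩ := hh.1
    have hWpos : 0 < Module.finrank ℂ W := by
      rcases Nat.eq_zero_or_pos (Module.finrank ℂ W) with hz | hp
      · exact absurd (funext fun x => by rw [← hW x, char_zero_of_finrank_zero W hz x]; rfl) hg0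
      · exact hp
    have hUpos : 0 < Module.finrank ℂ U := by
      rcases Nat.eq_zero_or_pos (Module.finrank ℂ U) with hz | hp
      · exact absurd (funext fun x => by rw [← hU x, char_zero_of_finrank_zero U hz x]; rfl) hh0
      · exact hp
    have hcast : ((n : ℂ)) = (Module.finrank ℂ W : ℂ) + (Module.finrank ℂ U : ℂ) := by
      rw [← FDRep.char_one W, ← FDRep.char_one U, hW 1, hU 1, ← Pi.add_apply, ← hgh,
        ← hV 1, ← hn, FDRep.char_one]
    have hsum : Module.finrank ℂ W + Module.finrank ℂ U = n := by
      exact_mod_cast hcast.symm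
    rw [hgh]
    exact Submodule.add_mem _
      (ih _ (by omega) g W hW rfl hg.2)
      (ih _ (by omega) h U hU rfl hh.2)


/-- For a prime `p`, a finite group `G` and a `p`-subgroup `P ≤ G`,
the space of `G`-invariant class functions on `P` is spanned by the indecomposable
`G`-invariant characters of `P`. -/
theorem span_indecomposable_invariant_chars
    (p : ℕ) (hp : p.Prime) (G : Type) [Group G] [Fintype G]
    (P : Subgroup G) (hP : IsPGroup p P)
    (f : P → ℂ) (hf : ∀ x y : P, IsConj (x : G) (y : G) → f x = f y) :
    f ∈ Submodule.span ℂ {g : P → ℂ | IsIndecInvariantChar P g} := by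
  classical
  set F : G → ℂ := fun g => if hex : ∃ x : P, IsConj ((x : G)) g then f hex.choose else 0 with hF
  have hFP : ∀ x : P, F (x : G) = f x := by
    intro x
    have hex : ∃ y : P, IsConj ((y : G)) (x : G) := ⟨x, IsConj.refl _⟩
    rw [hF]
    simp only [dif_pos hex]
    exact hf _ _ hex.choose_spec
  have hFcf : ∀ h g : G, F (h * g * h⁻¹) = F g := by
    intro h g
    have hconj : IsConj g (h * g * h⁻¹) := by
      rw [isConj_iff]; exact ⟨h, rfl⟩
    by_cases hex : ∃ x : P, IsConj ((x : G)) g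
    · have hex' : ∃ x : P, IsConj ((x : G)) (h * g * h⁻¹) :=
        ⟨hex.choose, hex.choose_spec.trans hconj⟩
      rw [hF]
      simp only [dif_pos hex, dif_pos hex']
      exact hf _ _ (hex'.choose_spec.trans (hconj.symm.trans hex.choose_spec.symm))
    · have hex' : ¬ ∃ x : P, IsConj ((x : G)) (h * g * h⁻¹) := by
        intro ⟨x, hx⟩
        exact hex ⟨x, hx.trans hconj.symm⟩
      rw [hF]
      simp only [dif_neg hex, dif_neg hex']
  have hFspan := classfun_mem_span_chars F hFcf
  set R : (G → ℂ) →ₗ[ℂ] (P → ℂ) := LinearMap.funLeft ℂ ℂ (fun x : P => (x : G)) with hR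
  have hfR : f = R F := funext fun x => (hFP x).symm
  have hmap : R F ∈ Submodule.map R (Submodule.span ℂ {χ : G → ℂ | IsCharacter χ}) :=
    Submodule.mem_map_of_mem hFspan
  rw [Submodule.map_span] at hmap
  have hle : Submodule.span ℂ (R '' {χ : G → ℂ | IsCharacter χ})
      ≤ Submodule.span ℂ {g : P → ℂ | IsIndecInvariantChar P g} := by
    rw [Submodule.span_le]
    rintro u ⟨χ, hχ, rfl⟩
    obtain ⟨V, hV⟩ := hχ
    set Vres : FDRep ℂ P := FDRep.of (V.ρ.comp P.subtype) with hVres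
    have hchar : ∀ x : P, Vres.character x = R χ x := by
      intro x
      show LinearMap.trace ℂ V ((V.ρ.comp P.subtype) x) = χ (x : G)
      exact hV (x : G)
    have hinv : ∀ x y : P, IsConj (x : G) (y : G) → R χ x = R χ y := by
      intro x y hxy
      obtain ⟨c, hc⟩ := isConj_iff.mp hxy
      show χ (x : G) = χ (y : G)
      rw [← hc, char_is_class ⟨V, hV⟩]
    exact invariant_char_mem_span P (Module.finrank ℂ Vres) (R χ) Vres hchar rfl hinv
  rw [hfR]
  exact hle hmap
end

section
/- Let G be a finite group and P a subgroup of G. Then the set of indecomposable G-invariant characters of P is finite. -/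
open scoped ComplexOrder

namespace CharAux

open FDRep CategoryTheory Module

variable {H : Type} [Group H]

noncomputable def prodRep (V W : FDRep ℂ H) : FDRep ℂ H :=
  FDRep.of
    { toFun := fun g => (V.ρ g).prodMap (W.ρ g)
      map_one' := by simp [LinearMap.prodMap_one]
      map_mul' := fun g h => by simp [map_mul, ← LinearMap.prodMap_mul] }

lemma prodRep_character (V W : FDRep ℂ H) (g : H) :
    (prodRep V W).character g = V.character g + W.character g := by
  have := LinearMap.trace_prodMap' (V.ρ g) (W.ρ g); exact this

lemma isCharacter_zero : IsCharacter (0 : H → ℂ) := by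
  refine ⟨FDRep.of (Representation.trivial ℂ (G := H) (V := (⊥ : Submodule ℂ ℂ))), fun h => ?_⟩
  have h0 : (FDRep.of (Representation.trivial ℂ (G := H) (V := (⊥ : Submodule ℂ ℂ)))).ρ h = 0 :=
    Subsingleton.elim (α := (⊥ : Submodule ℂ ℂ) →ₗ[ℂ] (⊥ : Submodule ℂ ℂ)) _ _
  simp [FDRep.character, h0]

lemma isCharacter_add {f g : H → ℂ} (hf : IsCharacter f) (hg : IsCharacter g) :
    IsCharacter (f + g) := by
  obtain ⟨V, hV⟩ := hf
  obtain ⟨W, hW⟩ := hg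
  exact ⟨prodRep V W, fun h => by rw [prodRep_character, hV, hW]; rfl⟩

lemma isCharacter_multiset_sum (m : Multiset (H → ℂ)) (hm : ∀ f ∈ m, IsCharacter f) :
    IsCharacter m.sum := by
  induction m using Multiset.induction with
  | empty => simpa using isCharacter_zero
  | cons a s ih =>
    rw [Multiset.sum_cons]
    exact isCharacter_add (hm a (Multiset.mem_cons_self a s))
      (ih fun f hf => hm f (Multiset.mem_cons_of_mem hf))

/-- `p` is an invariant submodule of `V`. -/
def IsSubrep (V : FDRep ℂ H) (p : Submodule ℂ V) : Prop := ∀ (g : H), ∀ x ∈ p, V.ρ g x ∈ p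

/-- The subrepresentation on an invariant submodule. -/
noncomputable def subrep (V : FDRep ℂ H) (p : Submodule ℂ V) (hp : IsSubrep V p) : FDRep ℂ H :=
  FDRep.of
    { toFun := fun g => (V.ρ g).restrict (hp g)
      map_one' := by ext x; simp [LinearMap.restrict_apply]
      map_mul' := fun g h => by ext x; simp [LinearMap.restrict_apply] }

lemma char_isCompl (V : FDRep ℂ H) (p q : Submodule ℂ V) (hp : IsSubrep V p) (hq : IsSubrep V q)
    (h : IsCompl p q) (g : H) :
    V.character g = (subrep V p hp).character g + (subrep V q hq).character g := by
  classical
  set e := Submodule.prodEquivOfIsCompl p q h with he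
  set F : (↥p × ↥q) →ₗ[ℂ] (↥p × ↥q) :=
    ((V.ρ g).restrict (hp g)).prodMap ((V.ρ g).restrict (hq g)) with hF
  have key : e.conj F = V.ρ g := by
    apply LinearMap.ext
    intro v
    rw [LinearEquiv.conj_apply_apply]
    conv_rhs => rw [← e.apply_symm_apply v]
    set z := e.symm v
    have h1 : e z = (z.1 : V) + (z.2 : V) := Submodule.coe_prodEquivOfIsCompl' p q h z
    have h2 : e (F z) = (V.ρ g z.1 : V) + (V.ρ g z.2 : V) := by
      have := Submodule.coe_prodEquivOfIsCompl' p q h (F z)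
      rw [this]; rfl
    rw [h2, h1, map_add]
  have htr := LinearMap.trace_conj' F e
  rw [key] at htr
  simp only [FDRep.character]
  rw [htr, hF, LinearMap.trace_prodMap']
  rfl

end CharAux

namespace CharAux2
open FDRep CategoryTheory CharAux Module

variable {H : Type} [Group H]

/-- Inclusion of a subrepresentation. -/
noncomputable def subrepIncl (V : FDRep ℂ H) (p : Submodule ℂ V) (hp : IsSubrep V p) :
    subrep V p hp ⟶ V where
  hom := ConcreteCategory.ofHom p.subtype
  comm := fun g => by ext x; rfl

lemma simple_of_subreps (V : FDRep ℂ H) (hnt : Nontrivial V)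
    (hs : ∀ p : Submodule ℂ V, IsSubrep V p → p = ⊥ ∨ p = ⊤) : Simple V := by
  constructor
  intro Y f m
  constructor
  · intro hiso h0
    have hid : (𝟙 V : V ⟶ V) = 0 := by
      have h1 := IsIso.inv_hom_id f
      have h2 : inv f ≫ f = inv f ≫ 0 := congrArg (CategoryStruct.comp (inv f)) h0
      rw [Limits.comp_zero] at h2
      rw [← h1, h2]
    obtain ⟨x, y, hxy⟩ := hnt
    apply hxy
    have hx : ∀ z : V, z = 0 := by
      intro z
      have h1 : (𝟙 V : V ⟶ V).hom z = (0 : V ⟶ V).hom z := by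
        rw [hid]
      rwa [Action.zero_hom, Action.id_hom] at h1
    rw [hx x, hx y]
  · intro hf0
    have hcomm : ∀ (g : H) (y : Y), f.hom (Y.ρ g y) = V.ρ g (f.hom y) := by
      intro g y
      exact congrArg (fun (φ : Y.V ⟶ V.V) => φ y) (f.comm g)
    have hker : LinearMap.ker f.hom.hom.hom = ⊥ := by
      set K := LinearMap.ker f.hom.hom.hom with hK
      have hKs : IsSubrep Y K := by
        intro g x hx
        rw [hK, LinearMap.mem_ker] at hx ⊢
        exact (hcomm g x).trans ((congrArg (V.ρ g) hx).trans (map_zero _))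
      have h0' : subrepIncl Y K hKs ≫ f = 0 ≫ f := by
        rw [Limits.zero_comp]
        apply Action.Hom.ext
        apply ConcreteCategory.hom_ext
        rintro ⟨x, hx⟩
        exact hx
      have := (cancel_mono f).mp h0'
      rw [Submodule.eq_bot_iff]
      intro x hx
      have hx0 : (subrepIncl Y K hKs).hom ⟨x, hx⟩ = ((0 : subrep Y K hKs ⟶ Y)).hom ⟨x, hx⟩ := by
        rw [this]
      exact hx0
    have hrange : LinearMap.range f.hom.hom.hom = ⊤ := by
      have hRs : IsSubrep V (LinearMap.range f.hom.hom.hom) := by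
        rintro g x ⟨y, rfl⟩
        exact ⟨Y.ρ g y, hcomm g y⟩
      rcases hs _ hRs with hbot | htop
      · exfalso
        apply hf0
        apply Action.Hom.ext
        rw [Action.zero_hom]
        exact ConcreteCategory.hom_ext _ _ fun y => LinearMap.congr_fun (LinearMap.range_eq_bot.mp hbot) y
      · exact htop
    have hbij : Function.Bijective f.hom :=
      ⟨LinearMap.ker_eq_bot.mp hker, LinearMap.range_eq_top.mp hrange⟩
    set E := LinearEquiv.ofBijective f.hom.hom.hom hbij with hE
    have hEapp : ∀ y : Y, E y = f.hom y := fun _ => rfl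
    refine ⟨⟨{ hom := ConcreteCategory.ofHom E.symm.toLinearMap, comm := ?_ }, ?_, ?_⟩⟩
    · intro g
      apply ConcreteCategory.hom_ext
      intro v
      apply hbij.injective
      show f.hom (E.symm (V.ρ g v)) = f.hom (Y.ρ g (E.symm v))
      rw [hcomm, ← hEapp, ← hEapp, E.apply_symm_apply, E.apply_symm_apply]
    · apply Action.Hom.ext
      apply ConcreteCategory.hom_ext
      intro y
      show E.symm (f.hom y) = y
      rw [← hEapp, E.symm_apply_apply]
    · apply Action.Hom.ext
      apply ConcreteCategory.hom_ext
      intro v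
      show f.hom (E.symm v) = v
      rw [← hEapp, E.apply_symm_apply]

end CharAux2

namespace CharAux3
open FDRep CategoryTheory CharAux CharAux2 Module

variable {H : Type} [Group H] [Fintype H]

omit [Fintype H] in
lemma char_zero_of_subsingleton (V : FDRep ℂ H) (hsub : Subsingleton V) :
    V.character = 0 := by
  funext g
  have h0 : V.ρ g = 0 := Subsingleton.elim _ _
  simp [FDRep.character, h0]

lemma char_mem_closure : ∀ (n : ℕ) (V : FDRep ℂ H), finrank ℂ V ≤ n →
    V.character ∈ AddSubmonoid.closure {f : H → ℂ | IsIrreducibleChar f} := by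
  intro n
  induction n with
  | zero =>
    intro V hV
    have hsub : Subsingleton V := Module.finrank_zero_iff (R := ℂ).mp (Nat.le_zero.mp hV)
    rw [char_zero_of_subsingleton V hsub]
    exact AddSubmonoid.zero_mem _
  | succ n ih =>
    intro V hV
    by_cases hsub : Subsingleton V
    · rw [char_zero_of_subsingleton V hsub]
      exact AddSubmonoid.zero_mem _
    by_cases hs : ∀ p : Submodule ℂ V, IsSubrep V p → p = ⊥ ∨ p = ⊤
    · have hnt : Nontrivial V := not_subsingleton_iff_nontrivial.mp hsub
      have hsimp := simple_of_subreps V hnt hs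
      exact AddSubmonoid.subset_closure ⟨V, hsimp, fun h => rfl⟩
    · push_neg at hs
      obtain ⟨p, hpinv, hpbot, hptop⟩ := hs
      letI : Module (MonoidAlgebra ℂ H) V := Module.compHom V ((Representation.asAlgebraHom V.ρ)).toRingHom
      have smul_def : ∀ (a : MonoidAlgebra ℂ H) (x : V), a • x = (Representation.asAlgebraHom V.ρ) a x :=
        fun a x => rfl
      haveI : NeZero ((Fintype.card H : ℂ)) := ⟨Nat.cast_ne_zero.mpr Fintype.card_ne_zero⟩
      let pA : Submodule (MonoidAlgebra ℂ H) V :=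
        { carrier := p
          add_mem' := fun ha hb => p.add_mem ha hb
          zero_mem' := p.zero_mem
          smul_mem' := by
            intro a x hx
            show (Representation.asAlgebraHom V.ρ) a x ∈ p
            induction a using MonoidAlgebra.induction_on with
            | of g => rw [Representation.asAlgebraHom_of]; exact hpinv g x hx
            | add a b ha hb => rw [map_add, LinearMap.add_apply]; exact p.add_mem ha hb
            | smul r a ha => rw [map_smul, LinearMap.smul_apply]; exact p.smul_mem r ha }
      obtain ⟨qA, hcompl⟩ := MonoidAlgebra.Submodule.exists_isCompl pA
      have halg : ∀ (c : ℂ) (x : V), (algebraMap ℂ (MonoidAlgebra ℂ H) c) • x = c • x := by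
        intro c x
        rw [smul_def, AlgHom.commutes]
        simp [Module.algebraMap_end_apply]
      let q : Submodule ℂ V :=
        { carrier := qA
          add_mem' := fun ha hb => qA.add_mem ha hb
          zero_mem' := qA.zero_mem
          smul_mem' := by
            intro c x hx
            have h1 : (algebraMap ℂ (MonoidAlgebra ℂ H) c) • x ∈ qA := qA.smul_mem _ hx
            show c • x ∈ qA
            rwa [halg] at h1 }
      have hqinv : IsSubrep V q := by
        intro g x hx
        have h1 : (MonoidAlgebra.of ℂ H g) • x ∈ qA := qA.smul_mem _ hx
        have he : (MonoidAlgebra.of ℂ H g) • x = V.ρ g x := by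
          rw [smul_def, Representation.asAlgebraHom_of]
        show V.ρ g x ∈ qA
        rwa [he] at h1
      have hpq : IsCompl p q := by
        constructor
        · rw [Submodule.disjoint_def]
          intro x hxp hxq
          exact (Submodule.disjoint_def.mp hcompl.disjoint) x hxp hxq
        · rw [codisjoint_iff, Submodule.eq_top_iff']
          intro x
          have hx : x ∈ pA ⊔ qA := by
            rw [codisjoint_iff.mp hcompl.codisjoint]; trivial
          obtain ⟨y, hy, z, hz, rfl⟩ := Submodule.mem_sup.mp hx
          exact Submodule.add_mem_sup (show y ∈ p from hy) (show z ∈ q from hz)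
      have hq_ne_top : q ≠ ⊤ := by
        intro h
        apply hpbot
        have := hpq.disjoint
        rw [h, disjoint_top] at this
        exact this
      have h1 : finrank ℂ ↥p < finrank ℂ V :=
        Submodule.finrank_lt hptop
      have h2 : finrank ℂ ↥q < finrank ℂ V :=
        Submodule.finrank_lt hq_ne_top
      have hchar : V.character =
          (subrep V p hpinv).character + (subrep V q hqinv).character :=
        funext fun g => char_isCompl V p q hpinv hqinv hpq g
      rw [hchar]
      refine AddSubmonoid.add_mem _ (ih _ ?_) (ih _ ?_)
      · exact Nat.le_of_lt_succ (lt_of_lt_of_le (show finrank ℂ _ < finrank ℂ V from h1) hV)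
      · exact Nat.le_of_lt_succ (lt_of_lt_of_le (show finrank ℂ _ < finrank ℂ V from h2) hV)

lemma exists_multiset (f : H → ℂ) (hf : IsCharacter f) :
    ∃ m : Multiset (H → ℂ), (∀ χ ∈ m, IsIrreducibleChar χ) ∧ f = m.sum := by
  obtain ⟨V, hV⟩ := hf
  have hf' : f = V.character := funext fun h => (hV h).symm
  have hmem := char_mem_closure (finrank ℂ V) V le_rfl
  obtain ⟨m, hm, hsum⟩ := AddSubmonoid.exists_multiset_of_mem_closure hmem
  exact ⟨m, hm, by rw [hf', ← hsum]⟩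

end CharAux3

namespace CharAux4
open FDRep CategoryTheory CharAux Module

variable {H : Type} [Group H] [Fintype H]

noncomputable def pairB (H : Type) [Group H] [Fintype H] : (H → ℂ) →ₗ[ℂ] (H → ℂ) →ₗ[ℂ] ℂ :=
  LinearMap.mk₂ ℂ (fun f g => ∑ x : H, f x * g x⁻¹)
    (fun f f' g => by simp [add_mul, Finset.sum_add_distrib])
    (fun c f g => by simp [Finset.mul_sum, mul_assoc])
    (fun f g g' => by simp [mul_add, Finset.sum_add_distrib])
    (fun c f g => by simp [Finset.mul_sum, mul_left_comm])

lemma pairB_apply (f g : H → ℂ) : pairB H f g = ∑ x : H, f x * g x⁻¹ := rfl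

lemma pairB_irr {χ ψ : H → ℂ} (hχ : IsIrreducibleChar χ) (hψ : IsIrreducibleChar ψ) :
    pairB H χ ψ = if χ = ψ then (Fintype.card H : ℂ) else 0 := by
  classical
  obtain ⟨V, hVs, hV⟩ := hχ
  obtain ⟨W, hWs, hW⟩ := hψ
  haveI hInv : Invertible ((Fintype.card H : ℂ)) :=
    invertibleOfNonzero (Nat.cast_ne_zero.mpr Fintype.card_ne_zero)
  by_cases h : χ = ψ
  · subst h
    haveI := hVs
    have key := FDRep.char_orthonormal (k := ℂ) (G := H) V V
    have key2 := congrArg (fun z : ℂ => (Fintype.card H : ℂ) * z) key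
    simp only [Nat.card_eq_fintype_card, ← mul_assoc, mul_inv_cancel₀ (show (Fintype.card H : ℂ) ≠ 0 from Nat.cast_ne_zero.mpr Fintype.card_ne_zero), one_mul, Nat.cast_one, Nat.cast_zero] at key2
    have key3 : ∑ g : H, V.character g * V.character g⁻¹ =
        (Fintype.card H : ℂ) * (if Nonempty (V ≅ V) then 1 else 0) := key2
    rw [if_pos ⟨Iso.refl V⟩, mul_one] at key3
    rw [if_pos rfl, pairB_apply]
    have h2 : ∑ g : H, χ g * χ g⁻¹ = ∑ g : H, V.character g * V.character g⁻¹ :=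
      Finset.sum_congr rfl fun x _ => by rw [hV, hV]
    rw [h2, key3]
  · rw [if_neg h]
    haveI := hVs; haveI := hWs
    have key := FDRep.char_orthonormal (k := ℂ) (G := H) V W
    have key2 := congrArg (fun z : ℂ => (Fintype.card H : ℂ) * z) key
    simp only [Nat.card_eq_fintype_card, ← mul_assoc, mul_inv_cancel₀ (show (Fintype.card H : ℂ) ≠ 0 from Nat.cast_ne_zero.mpr Fintype.card_ne_zero), one_mul, Nat.cast_one, Nat.cast_zero] at key2
    have key3 : ∑ g : H, V.character g * W.character g⁻¹ =
        (Fintype.card H : ℂ) * (if Nonempty (V ≅ W) then 1 else 0) := key2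
    have hno : ¬ Nonempty (V ≅ W) := by
      rintro ⟨i⟩
      apply h
      have hci := FDRep.char_iso i
      funext x
      rw [← hV x, ← hW x, hci]
    rw [if_neg hno, mul_zero] at key3
    rw [pairB_apply]
    have h2 : ∑ g : H, χ g * ψ g⁻¹ = ∑ g : H, V.character g * W.character g⁻¹ :=
      Finset.sum_congr rfl fun x _ => by rw [hV, hW]
    rw [h2, key3]

lemma irr_finite : {f : H → ℂ | IsIrreducibleChar f}.Finite := by
  classical
  have hcard : (Fintype.card H : ℂ) ≠ 0 := Nat.cast_ne_zero.mpr Fintype.card_ne_zero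
  apply LinearIndependent.setFinite (R := ℂ)
  rw [linearIndependent_iff']
  intro s g hg i hi
  have h2 := congrArg (fun F => pairB H F (i : H → ℂ)) hg
  simp only [map_sum, LinearMap.map_smul₂, map_zero, LinearMap.sum_apply,
    LinearMap.smul_apply, LinearMap.zero_apply] at h2
  have h3 : ∀ j ∈ s, g j • pairB H (j : H → ℂ) (i : H → ℂ) =
      if j = i then g j * (Fintype.card H : ℂ) else 0 := by
    intro j _
    rw [pairB_irr j.2 i.2]
    by_cases hji : j = i
    · subst hji; rw [if_pos rfl, if_pos rfl]; simp [smul_eq_mul]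
    · rw [if_neg hji, if_neg (fun hc => hji (Subtype.ext hc))]; simp
  rw [Finset.sum_congr rfl h3, Finset.sum_ite_eq' s i (fun j => g j * _), if_pos hi] at h2
  exact (mul_eq_zero.mp h2).resolve_right hcard

end CharAux4

/-- For a finite group `G` and a subgroup `P ≤ G`, the set of
indecomposable `G`-invariant characters of `P` is finite. -/
theorem finite_indecomposable_invariant_chars
    (G : Type) [Group G] [Fintype G] (P : Subgroup G) :
    {f : P → ℂ | IsIndecInvariantChar P f}.Finite := by
  classical
  letI : Fintype ↥P := Fintype.ofFinite ↥P
  set Irr : Set (↥P → ℂ) := {f | IsIrreducibleChar f} with hIrr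
  have hIrrFin : Irr.Finite := CharAux4.irr_finite
  haveI : Finite ↥Irr := hIrrFin.to_subtype
  let m : (↥P → ℂ) → Multiset (↥P → ℂ) := fun f =>
    if hf : IsCharacter f then Classical.choose (CharAux3.exists_multiset f hf) else 0
  have hm : ∀ (f : ↥P → ℂ) (hf : IsCharacter f),
      (∀ χ ∈ m f, IsIrreducibleChar χ) ∧ f = (m f).sum := by
    intro f hf
    simp only [m, dif_pos hf]
    exact Classical.choose_spec (CharAux3.exists_multiset f hf)
  let Φ : (↥P → ℂ) → (↥Irr → ℕ) := fun f χ => (m f).count (χ : ↥P → ℂ)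
  set S := {f : ↥P → ℂ | IsIndecInvariantChar P f} with hS
  have hSchar : ∀ f ∈ S, IsCharacter f := fun f hf => hf.1.1
  have hinj : Set.InjOn Φ S := by
    intro f hf g hg hfg
    have hf' := hSchar f hf
    have hg' := hSchar g hg
    have hcount : ∀ χ : ↥P → ℂ, (m f).count χ = (m g).count χ := by
      intro χ
      by_cases hχ : IsIrreducibleChar χ
      · exact congrFun hfg ⟨χ, hχ⟩
      · rw [Multiset.count_eq_zero.mpr (fun hmem => hχ ((hm f hf').1 χ hmem)),
          Multiset.count_eq_zero.mpr (fun hmem => hχ ((hm g hg').1 χ hmem))]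
    have : m f = m g := Multiset.ext.mpr hcount
    calc f = (m f).sum := (hm f hf').2
      _ = (m g).sum := by rw [this]
      _ = g := ((hm g hg').2).symm
  have himg : (Φ '' S).Finite := by
    have hanti : IsAntichain (· ≤ ·) (Φ '' S) := by
      rintro a ⟨f, hfS, rfl⟩ b ⟨g, hgS, rfl⟩ hab hle
      have hf' := hSchar f hfS
      have hg' := hSchar g hgS
      have hfg : f ≠ g := fun he => hab (by rw [he])
      have hmle : m f ≤ m g := by
        rw [Multiset.le_iff_count]
        intro χ
        by_cases hχ : IsIrreducibleChar χ
        · exact hle ⟨χ, hχ⟩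
        · rw [Multiset.count_eq_zero.mpr (fun hmem => hχ ((hm f hf').1 χ hmem))]
          exact Nat.zero_le _
      have h4 : g = f + (m g - m f).sum := by
        calc g = (m g).sum := (hm g hg').2
          _ = (m f + (m g - m f)).sum := by rw [add_tsub_cancel_of_le hmle]
          _ = (m f).sum + (m g - m f).sum := by rw [Multiset.sum_add]
          _ = f + (m g - m f).sum := by rw [← (hm f hf').2]
      set d := (m g - m f).sum with hd
      have hdchar : IsCharacter d := by
        apply CharAux.isCharacter_multiset_sum
        intro χ hχ
        have hχ2 : χ ∈ m g := Multiset.mem_of_le (tsub_le_self) hχ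
        obtain ⟨V, _, hV⟩ := (hm g hg').1 χ hχ2
        exact ⟨V, hV⟩
      have hdne : d ≠ 0 := by
        intro h0
        rw [h0, add_zero] at h4
        exact hfg h4.symm
      have hdpt : ∀ x : ↥P, d x = g x - f x := by
        intro x
        rw [h4]
        simp
      have hdinv : IsInvariantChar P d := by
        refine ⟨hdchar, fun x y hxy => ?_⟩
        rw [hdpt, hdpt, hfS.1.2 x y hxy, hgS.1.2 x y hxy]
      exact hgS.2.2 ⟨f, d, hfS.1, hdinv, hfS.2.1, hdne, h4⟩
    exact hanti.finite_of_partiallyWellOrderedOn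
      (Set.isPWO_of_wellQuasiOrderedLE (Φ '' S))
  exact Set.Finite.of_finite_image himg hinj
end

section
/- Let G be a finite group and P a subgroup of G. Then the restrictions χ|_P of the irreducible characters χ of G to P span the complex vector space of G-invariant class functions on P. -/
open scoped ComplexOrder

section CharSpanAux

open MonoidAlgebra

set_option linter.unusedSectionVars false


variable {G : Type} [Group G] [Fintype G]

noncomputable instance : FiniteDimensional ℂ (MonoidAlgebra ℂ G) :=
  Module.Finite.equiv (MonoidAlgebra.coeffLinearEquiv ℂ).symm

noncomputable instance (S : Submodule (MonoidAlgebra ℂ G) (MonoidAlgebra ℂ G)) :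
    FiniteDimensional ℂ S :=
  FiniteDimensional.of_injective (S.subtype.restrictScalars ℂ) Subtype.coe_injective

/-- multiplication by `z` as a ℂ-linear endomorphism of the submodule `S`. -/
noncomputable def mulS (S : Submodule (MonoidAlgebra ℂ G) (MonoidAlgebra ℂ G)) :
    MonoidAlgebra ℂ G →ₗ[ℂ] (S →ₗ[ℂ] S) where
  toFun z :=
    { toFun := fun x => ⟨z * x.1, by simpa [smul_eq_mul] using S.smul_mem z x.2⟩
      map_add' := fun x y => by ext; simp [mul_add]
      map_smul' := fun c x => by ext; simp [Algebra.mul_smul_comm] }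
  map_add' z w := by ext x; simp [add_mul]
  map_smul' c z := by ext x; simp [Algebra.smul_mul_assoc]

/-- The representation of `G` on a submodule of the group algebra. -/
noncomputable def subRep (S : Submodule (MonoidAlgebra ℂ G) (MonoidAlgebra ℂ G)) :
    Representation ℂ G S where
  toFun g := mulS S (single g 1)
  map_one' := by ext x; simp [mulS, one_def]
  map_mul' g h := by ext x; simp [mulS, single_mul_single, mul_assoc]

lemma single_smul_eq_subRep (S : Submodule (MonoidAlgebra ℂ G) (MonoidAlgebra ℂ G))
    (g : G) (x : S) : (single g 1 : MonoidAlgebra ℂ G) • x = subRep S g x := by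
  ext; simp [subRep, mulS, Submodule.coe_smul_of_tower, smul_eq_mul]

/-- A `ρ`-invariant `ℂ`-subspace of a simple submodule of the group algebra is `⊥` or `⊤`. -/
lemma invariant_eq_bot_or_top (S : Submodule (MonoidAlgebra ℂ G) (MonoidAlgebra ℂ G))
    (hS : IsSimpleModule (MonoidAlgebra ℂ G) S)
    (p : Submodule ℂ S) (hp : ∀ (g : G) (x : S), x ∈ p → subRep S g x ∈ p) :
    p = ⊥ ∨ p = ⊤ := by
  let q : Submodule (MonoidAlgebra ℂ G) S :=
    { carrier := (p : Set S)
      add_mem' := fun ha hb => p.add_mem ha hb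
      zero_mem' := p.zero_mem
      smul_mem' := by
        intro a x hx
        have key : a • x = ∑ g ∈ a.coeff.support, (a.coeff g) • ((single g 1 : MonoidAlgebra ℂ G) • x) := by
          conv_lhs => rw [← sum_coeff_single a]
          rw [Finsupp.sum, Finset.sum_smul]
          refine Finset.sum_congr rfl fun g _ => ?_
          rw [← smul_assoc, MonoidAlgebra.smul_single', mul_one]
        rw [key]
        exact Submodule.sum_mem _ fun g _ => p.smul_mem _ (by
          rw [single_smul_eq_subRep]; exact hp g x hx) }
  rcases hS.toIsSimpleOrder.2 q with h | h
  · left; ext x; exact SetLike.ext_iff.mp h x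
  · right; ext x; exact SetLike.ext_iff.mp h x

set_option linter.unusedSectionVars false

lemma central_mul_eq_zero (S : Submodule (MonoidAlgebra ℂ G) (MonoidAlgebra ℂ G))
    (hS : IsSimpleModule (MonoidAlgebra ℂ G) S) (z : MonoidAlgebra ℂ G)
    (hz : ∀ a, z * a = a * z)
    (htr : LinearMap.trace ℂ S (mulS S z) = 0) :
    ∀ x : S, mulS S z x = 0 := by
  haveI := hS
  haveI : Nontrivial S := IsSimpleModule.nontrivial (MonoidAlgebra ℂ G) S
  obtain ⟨μ, hμ⟩ := Module.End.exists_eigenvalue (mulS S z)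
  obtain ⟨v, hv⟩ := hμ.exists_hasEigenvector
  -- the eigenspace is invariant, hence everything
  have hinv : ∀ (g : G) (x : S), x ∈ Module.End.eigenspace (mulS S z) μ →
      subRep S g x ∈ Module.End.eigenspace (mulS S z) μ := by
    intro g x hx
    rw [Module.End.mem_eigenspace_iff] at hx ⊢
    have hcomm : mulS S z (subRep S g x) = subRep S g (mulS S z x) := by
      ext; simp [subRep, mulS, ← mul_assoc, hz]
    rw [hcomm, hx, map_smul]
  rcases invariant_eq_bot_or_top S hS _ hinv with h | h
  · exfalso
    have hv1 : v ∈ Module.End.eigenspace (mulS S z) μ := hv.1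
    rw [h] at hv1
    exact hv.2 (by simpa using hv1)
  · have hall : ∀ x : S, mulS S z x = μ • x := by
      intro x
      have : x ∈ Module.End.eigenspace (mulS S z) μ := h ▸ Submodule.mem_top
      exact Module.End.mem_eigenspace_iff.mp this
    have heq : mulS S z = μ • LinearMap.id := LinearMap.ext fun x => by simpa using hall x
    have : LinearMap.trace ℂ S (mulS S z) = μ * (Module.finrank ℂ S) := by
      rw [heq]; simp [LinearMap.trace_id]
    have hμ0 : μ = 0 := by
      have hpos : 0 < Module.finrank ℂ S := Module.finrank_pos
      have := htr ▸ this
      rw [eq_comm, mul_eq_zero] at this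
      rcases this with h | h
      · exact h
      · exact absurd h (by exact_mod_cast hpos.ne')
    intro x
    rw [hall x, hμ0, zero_smul]

open CategoryTheory

noncomputable def subFDRep (S : Submodule (MonoidAlgebra ℂ G) (MonoidAlgebra ℂ G)) :
    FDRep ℂ G := FDRep.of (subRep S)

lemma subFDRep_ρ (S : Submodule (MonoidAlgebra ℂ G) (MonoidAlgebra ℂ G)) (g : G) :
    (subFDRep S).ρ g = subRep S g := rfl

lemma subFDRep_simple (S : Submodule (MonoidAlgebra ℂ G) (MonoidAlgebra ℂ G))
    (hS : IsSimpleModule (MonoidAlgebra ℂ G) S) : Simple (subFDRep S) := by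
  haveI := hS
  haveI : Nontrivial S := IsSimpleModule.nontrivial (MonoidAlgebra ℂ G) S
  constructor
  intro Y f hmono
  constructor
  · intro hiso h0
    have h1 : 𝟙 (subFDRep S) = 0 := by
      calc 𝟙 (subFDRep S) = inv f ≫ f := (IsIso.inv_hom_id f).symm
        _ = inv f ≫ 0 := congrArg (fun t => inv f ≫ t) h0
        _ = 0 := Limits.comp_zero
    obtain ⟨x, hx⟩ := exists_ne (0 : S)
    have : ((𝟙 (subFDRep S) : subFDRep S ⟶ subFDRep S).hom.hom.hom :
        (subFDRep S : Type) →ₗ[ℂ] (subFDRep S : Type)) x = 0 := by rw [h1]; rfl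
    exact hx this
  · intro hne
    -- injectivity
    have hinj : Function.Injective (f.hom.hom.hom : (Y : Type) →ₗ[ℂ] (subFDRep S : Type)) := by
      rw [← LinearMap.ker_eq_bot]
      have hKinv : ∀ (g : G) (x : (Y : Type)),
          x ∈ LinearMap.ker (f.hom.hom.hom : (Y : Type) →ₗ[ℂ] (subFDRep S : Type)) →
          Y.ρ g x ∈ LinearMap.ker (f.hom.hom.hom : (Y : Type) →ₗ[ℂ] (subFDRep S : Type)) := by
        intro g x hx
        have hc : f.hom.hom.hom (Y.ρ g x) = (subFDRep S).ρ g (f.hom.hom.hom x) :=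
          congrArg (fun (h : Y.V ⟶ (subFDRep S).V) => h.hom.hom x)
            (f.comm g)
        rw [LinearMap.mem_ker] at hx ⊢
        exact hc.trans ((congrArg (fun t => (subFDRep S).ρ g t) hx).trans (map_zero _))
      let ρK : Representation ℂ G
          (LinearMap.ker (f.hom.hom.hom : (Y : Type) →ₗ[ℂ] (subFDRep S : Type))) :=
        { toFun := fun g => (Y.ρ g).restrict (fun x hx => hKinv g x hx)
          map_one' := by
            refine LinearMap.ext fun x => Subtype.ext ?_
            show Y.ρ 1 x.1 = x.1
            rw [map_one]
            rfl
          map_mul' := fun g h => by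
            refine LinearMap.ext fun x => Subtype.ext ?_
            show Y.ρ (g * h) x.1 = Y.ρ g (Y.ρ h x.1)
            rw [map_mul]
            rfl }
      let YK : FDRep ℂ G := FDRep.of ρK
      let ι : YK ⟶ Y :=
        ⟨FGModuleCat.ofHom (LinearMap.ker (f.hom.hom.hom : (Y : Type) →ₗ[ℂ] (subFDRep S : Type))).subtype,
          fun g => rfl⟩
      have hcomp : ι ≫ f = (0 : YK ⟶ Y) ≫ f := by
        rw [Limits.zero_comp]
        apply Action.Hom.ext
        apply FGModuleCat.hom_ext; apply LinearMap.ext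
        intro x
        exact x.2
      have hι : ι = 0 := (cancel_mono f).mp hcomp
      ext x
      constructor
      · intro hx
        have : (⟨x, hx⟩ :
            LinearMap.ker (f.hom.hom.hom : (Y : Type) →ₗ[ℂ] (subFDRep S : Type))).1 = 0 := by
          have := congrArg (fun (h : YK ⟶ Y) =>
            (h.hom.hom.hom : (YK : Type) →ₗ[ℂ] (Y : Type)) ⟨x, hx⟩) hι
          exact this
        simpa using this
      · intro hx
        simp only [Submodule.mem_bot] at hx
        simp [hx]
    -- surjectivity
    have hsurj : Function.Surjective (f.hom.hom.hom : (Y : Type) →ₗ[ℂ] (subFDRep S : Type)) := by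
      rw [← LinearMap.range_eq_top]
      have hpinv : ∀ (g : G) (x : S),
          x ∈ LinearMap.range (f.hom.hom.hom : (Y : Type) →ₗ[ℂ] (subFDRep S : Type)) →
          subRep S g x ∈ LinearMap.range (f.hom.hom.hom : (Y : Type) →ₗ[ℂ] (subFDRep S : Type)) := by
        rintro g x ⟨y, rfl⟩
        refine ⟨Y.ρ g y, ?_⟩
        exact congrArg (fun (h : Y.V ⟶ (subFDRep S).V) => h.hom.hom y)
          (f.comm g)
      rcases invariant_eq_bot_or_top S hS _ hpinv with h | h
      · exfalso
        apply hne
        apply Action.Hom.ext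
        apply FGModuleCat.hom_ext; apply LinearMap.ext
        intro y
        have : f.hom.hom.hom y ∈
            LinearMap.range (f.hom.hom.hom : (Y : Type) →ₗ[ℂ] (subFDRep S : Type)) := ⟨y, rfl⟩
        rw [h] at this
        exact (Submodule.mem_bot ℂ).mp this
      · exact h
    -- build the inverse
    let e : (Y : Type) ≃ₗ[ℂ] (subFDRep S : Type) :=
      LinearEquiv.ofBijective (f.hom.hom.hom : (Y : Type) →ₗ[ℂ] (subFDRep S : Type)) ⟨hinj, hsurj⟩
    have hcomm : ∀ g : G, ∀ x, e.symm ((subFDRep S).ρ g x) = Y.ρ g (e.symm x) := by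
      intro g x
      apply hinj
      have h1 : (e (e.symm ((subFDRep S).ρ g x)) : (subFDRep S : Type)) =
          (subFDRep S).ρ g x := e.apply_symm_apply _
      have h2 : f.hom.hom.hom (Y.ρ g (e.symm x)) = (subFDRep S).ρ g (f.hom.hom.hom (e.symm x)) :=
        congrArg (fun (h : Y.V ⟶ (subFDRep S).V) => h.hom.hom (e.symm x))
          (f.comm g)
      show e _ = e _
      rw [h1]
      show _ = f.hom.hom.hom (Y.ρ g (e.symm x))
      rw [h2]
      congr 1
      exact (e.apply_symm_apply x).symm
    let ginv : subFDRep S ⟶ Y :=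
      ⟨FGModuleCat.ofHom (e.symm.toLinearMap : (subFDRep S : Type) →ₗ[ℂ] (Y : Type)), by
        intro g
        apply FGModuleCat.hom_ext; apply LinearMap.ext
        intro x
        exact hcomm g x⟩
    refine ⟨⟨ginv, ?_, ?_⟩⟩
    · apply Action.Hom.ext; apply FGModuleCat.hom_ext; apply LinearMap.ext; intro x
      exact e.symm_apply_apply x
    · apply Action.Hom.ext; apply FGModuleCat.hom_ext; apply LinearMap.ext; intro x
      exact e.apply_symm_apply x

lemma subFDRep_character (S : Submodule (MonoidAlgebra ℂ G) (MonoidAlgebra ℂ G)) (g : G) :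
    (subFDRep S).character g = LinearMap.trace ℂ S (mulS S (single g 1)) := rfl

lemma crux (f : G → ℂ) (hf : ∀ x y : G, IsConj x y → f x = f y)
    (h0 : ∀ χ : G → ℂ, IsIrreducibleChar χ → ∑ g, f g * χ g = 0) : f = 0 := by
  classical
  set z : MonoidAlgebra ℂ G := ∑ g, f g • single g 1 with hz
  -- z is central
  have hcen : ∀ a : MonoidAlgebra ℂ G, z * a = a * z := by
    intro a
    induction a using MonoidAlgebra.induction_on with
    | of g =>
      show z * single g 1 = single g 1 * z
      rw [hz, Finset.sum_mul, Finset.mul_sum]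
      refine Fintype.sum_equiv (MulAut.conj g).toEquiv.symm _ _ ?_
      intro y
      simp only [MulAut.conj_symm_apply, MulEquiv.toEquiv_eq_coe, MulEquiv.coe_toEquiv_symm,
        MulAut.conj_inv_apply]
      rw [smul_mul_assoc, mul_smul_comm, single_mul_single, single_mul_single]
      simp only [one_mul, mul_one]
      have : f y = f (g⁻¹ * y * g) := hf _ _ (isConj_iff.mpr ⟨g⁻¹, by group⟩)
      rw [← this]
      congr 2
      group
    | add a b ha hb => rw [mul_add, add_mul, ha, hb]
    | smul r a ha => rw [mul_smul_comm, smul_mul_assoc, ha]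
  -- trace of the action of z on any submodule
  have htr : ∀ S : Submodule (MonoidAlgebra ℂ G) (MonoidAlgebra ℂ G),
      LinearMap.trace ℂ S (mulS S z) = ∑ g, f g * (subFDRep S).character g := by
    intro S
    have : LinearMap.trace ℂ S (mulS S z) =
        ((LinearMap.trace ℂ S).comp (mulS S)) z := rfl
    rw [this, hz, map_sum]
    refine Finset.sum_congr rfl fun g _ => ?_
    rw [map_smul, smul_eq_mul, subFDRep_character]
    rfl
  -- z acts by zero on any simple submodule
  have hzero : ∀ S : Submodule (MonoidAlgebra ℂ G) (MonoidAlgebra ℂ G),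
      IsSimpleModule (MonoidAlgebra ℂ G) S → ∀ x ∈ S, z * x = 0 := by
    intro S hS x hx
    have hirr : IsIrreducibleChar ((subFDRep S).character) :=
      ⟨subFDRep S, subFDRep_simple S hS, fun h => rfl⟩
    have := central_mul_eq_zero S hS z hcen (by rw [htr S]; exact h0 _ hirr) ⟨x, hx⟩
    exact Subtype.ext_iff.mp this
  -- hence z = 0
  haveI : NeZero ((Fintype.card G : ℂ)) := ⟨Nat.cast_ne_zero.mpr Fintype.card_ne_zero⟩
  have htop := IsSemisimpleModule.sSup_simples_eq_top
    (MonoidAlgebra ℂ G) (MonoidAlgebra ℂ G)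
  have h1 : (1 : MonoidAlgebra ℂ G) ∈
      sSup { m : Submodule (MonoidAlgebra ℂ G) (MonoidAlgebra ℂ G) |
        IsSimpleModule (MonoidAlgebra ℂ G) m } := by rw [htop]; trivial
  rw [sSup_eq_iSup'] at h1
  have hz1 : z * 1 = 0 := by
    refine Submodule.iSup_induction _ (motive := fun x => z * x = 0) h1 ?_ ?_ ?_
    · rintro ⟨S, hS⟩ x hx
      exact hzero S hS x hx
    · show z * 0 = 0
      rw [mul_zero]
    · intro x y hx hy
      show z * (x + y) = 0
      rw [mul_add, hx, hy, add_zero]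
  have hz0 : z = 0 := by rwa [mul_one] at hz1
  funext g
  have : z.coeff g = f g := by
    rw [hz]
    rw [coeff_sum, Finsupp.finset_sum_apply]
    simp [Finsupp.single_apply, coeff_smul, coeff_single]
  rw [← this, hz0]
  rfl

/-- The subspace of class functions on `G`. -/
noncomputable def classFun (G : Type) [Group G] : Submodule ℂ (G → ℂ) where
  carrier := {f | ∀ x y : G, IsConj x y → f x = f y}
  add_mem' := fun ha hb x y h => by simp [ha x y h, hb x y h]
  zero_mem' := fun x y h => rfl
  smul_mem' := fun c f hf x y h => by simp [hf x y h]

lemma irr_subset_classFun :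
    {χ : G → ℂ | IsIrreducibleChar χ} ⊆ (classFun G : Set (G → ℂ)) := by
  rintro χ ⟨V, hV, hχ⟩ x y hxy
  obtain ⟨c, hc⟩ := isConj_iff.mp hxy
  rw [← hχ, ← hχ, ← hc]
  have : c * x * c⁻¹ = c * (x * c⁻¹) := by group
  rw [this, FDRep.char_mul_comm]
  congr 1
  group

lemma span_irr_eq_classFun :
    Submodule.span ℂ {χ : G → ℂ | IsIrreducibleChar χ} = classFun G := by
  classical
  set W := Submodule.span ℂ {χ : G → ℂ | IsIrreducibleChar χ} with hW
  have hWle : W ≤ classFun G := Submodule.span_le.mpr irr_subset_classFun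
  -- the pairing map into the dual of W
  let φ : (classFun G : Submodule ℂ (G → ℂ)) →ₗ[ℂ] Module.Dual ℂ W :=
    { toFun := fun f =>
        { toFun := fun χ => ∑ g, f.1 g * χ.1 g
          map_add' := fun χ₁ χ₂ => by
            simp [mul_add, Finset.sum_add_distrib]
          map_smul' := fun c χ => by
            simp [Finset.mul_sum, mul_left_comm] }
      map_add' := fun f₁ f₂ => by
        ext χ
        simp [add_mul, Finset.sum_add_distrib]
      map_smul' := fun c f => by
        ext χ
        simp [Finset.mul_sum, mul_assoc] }
  have hφinj : Function.Injective φ := by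
    rw [← LinearMap.ker_eq_bot]
    ext f
    simp only [LinearMap.mem_ker, Submodule.mem_bot]
    constructor
    · intro hfk
      have hcrux : (f.1 : G → ℂ) = 0 := by
        apply crux f.1 f.2
        intro χ hχ
        have hχW : χ ∈ W := Submodule.subset_span hχ
        have := congrArg (fun (ψ : Module.Dual ℂ W) => ψ ⟨χ, hχW⟩) hfk
        exact this
      exact Subtype.ext hcrux
    · intro h; rw [h]; simp
  have hrank : Module.finrank ℂ (classFun G : Submodule ℂ (G → ℂ)) ≤ Module.finrank ℂ W := by
    have h1 := LinearMap.finrank_le_finrank_of_injective hφinj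
    rwa [Subspace.dual_finrank_eq] at h1
  exact Submodule.eq_of_le_of_finrank_le hWle hrank

theorem span_restrictions_of_irreducible_chars'
    (G : Type) [Group G] [Fintype G] (P : Subgroup G)
    (f : P → ℂ) (hf : ∀ x y : P, IsConj (x : G) (y : G) → f x = f y) :
    f ∈ Submodule.span ℂ
      {g : P → ℂ | ∃ χ : G → ℂ, IsIrreducibleChar χ ∧ g = fun x : P => χ (x : G)} := by
  classical
  -- extend `f` to a class function on `G`
  set F : G → ℂ := fun g => if h : ∃ p : P, IsConj (p : G) g then f h.choose else 0 with hF
  have hFclass : F ∈ classFun G := by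
    intro x y hxy
    by_cases h : ∃ p : P, IsConj (p : G) x
    · have h' : ∃ p : P, IsConj (p : G) y := ⟨h.choose, h.choose_spec.trans hxy⟩
      rw [hF]
      simp only
      rw [dif_pos h, dif_pos h']
      exact hf _ _ (h.choose_spec.trans (hxy.trans h'.choose_spec.symm))
    · have h' : ¬∃ p : P, IsConj (p : G) y := by
        rintro ⟨p, hp⟩
        exact h ⟨p, hp.trans hxy.symm⟩
      rw [hF]
      simp only
      rw [dif_neg h, dif_neg h']
  have hFres : ∀ x : P, F (x : G) = f x := by
    intro x
    have hex : ∃ p : P, IsConj (p : G) (x : G) := ⟨x, IsConj.refl _⟩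
    rw [hF]
    simp only
    rw [dif_pos hex]
    exact hf _ _ hex.choose_spec
  have hFspan : F ∈ Submodule.span ℂ {χ : G → ℂ | IsIrreducibleChar χ} := by
    rw [span_irr_eq_classFun]; exact hFclass
  let res : (G → ℂ) →ₗ[ℂ] (P → ℂ) := LinearMap.funLeft ℂ ℂ ((↑) : P → G)
  have : res F ∈ Submodule.span ℂ (res '' {χ : G → ℂ | IsIrreducibleChar χ}) :=
    Submodule.apply_mem_span_image_of_mem_span res hFspan
  have himg : res '' {χ : G → ℂ | IsIrreducibleChar χ} =
      {g : P → ℂ | ∃ χ : G → ℂ, IsIrreducibleChar χ ∧ g = fun x : P => χ (x : G)} := by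
    ext g
    constructor
    · rintro ⟨χ, hχ, rfl⟩
      exact ⟨χ, hχ, rfl⟩
    · rintro ⟨χ, hχ, rfl⟩
      exact ⟨χ, hχ, rfl⟩
  rw [himg] at this
  have hfres : f = res F := by
    funext x
    exact (hFres x).symm
  rw [hfres]
  exact this

end CharSpanAux

/-- For a finite group `G` and a subgroup `P ≤ G`, the restrictions to
`P` of the irreducible characters of `G` span the space of `G`-invariant class functions
on `P` (functions constant on intersections of `P` with `G`-conjugacy classes). -/
theorem span_restrictions_of_irreducible_chars
    (G : Type) [Group G] [Fintype G] (P : Subgroup G)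
    (f : P → ℂ) (hf : ∀ x y : P, IsConj (x : G) (y : G) → f x = f y) :
    f ∈ Submodule.span ℂ
      {g : P → ℂ | ∃ χ : G → ℂ, IsIrreducibleChar χ ∧ g = fun x : P => χ (x : G)} :=
  span_restrictions_of_irreducible_chars' G P f hf
end
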